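/- arXiv:2111.12306 — 4 statements merged into one kernel-verified Lean document; each statement's English description precedes it below -/
import Mathlib

section
/- Let Y ∈ [-1,1]^{K×K} be skew-symmetric, γ ≥ 2K, and suppose p ∈ Δ_K satisfies for every i ∈ [K]: Σ_b Y[i,b]p[b] + (2/γ)(1/p[i]) ≤ 5K/γ (so in particular p[i] > 0 for all i). Then for every skew-symmetric f ∈ [-1,1]^{K×K} and every q ∈ Δ_K, q^⊤ f p ≤ (γ/2)·Σ_{a,b} p[a]p[b](f[a,b] - Y[a,b])^2 + 5K/γ. -/
/-!
Write `f = (f - Y) + Y` and bound each row `a` of the payoff `q a * ∑ b, f a b * p b` separately.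
Against `Y`, the feasibility of `p` leaves the slack `2 / (γ p a)` below `5K/γ`. Against the
error `e = f - Y`, Young's inequality with weight `γ p a` followed by Jensen's inequality
`(∑ b, p b e b)² ≤ ∑ b, p b (e b)²` gives `(γ/2) p a ∑ b, p b (e b)² + (q a)² / (2 γ p a)`,
and since `q a ≤ 1` the last term fits into that slack.
-/

open Finset

lemma sq_sum_mul_le_sum_mul_sq {ι : Type*} [Fintype ι] {w : ι → ℝ} (hw : w ∈ stdSimplex ℝ ι)
    (x : ι → ℝ) : (∑ i, w i * x i) ^ 2 ≤ ∑ i, w i * x i ^ 2 :=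
  even_two.convexOn_pow.map_sum_le (fun i _ => hw.1 i) hw.2 fun _ _ => Set.mem_univ _

lemma mul_le_half_mul_sq_add_sq_div {c : ℝ} (hc : 0 < c) (x t : ℝ) :
    x * t ≤ c / 2 * t ^ 2 + x ^ 2 / (2 * c) := by
  have := two_mul_le_add_sq (c * t) x
  field_simp
  nlinarith

lemma row_payoff_le_of_feasible {ι : Type*} [Fintype ι] {γ π x C : ℝ} {p f y : ι → ℝ}
    (hγ : 0 < γ) (hp : p ∈ stdSimplex ℝ ι) (hπ : 0 < π) (hx : x ∈ Set.Icc (0 : ℝ) 1)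
    (hrow : ∑ b, y b * p b + 2 / γ * (1 / π) ≤ C) :
    x * ∑ b, f b * p b ≤ γ / 2 * ∑ b, π * p b * (f b - y b) ^ 2 + x * C := by
  set t := ∑ b, (f b - y b) * p b
  have hsplit : ∑ b, f b * p b = t + ∑ b, y b * p b := by
    rw [← sum_add_distrib]; congr! 1; ring
  have hjensen : t ^ 2 ≤ ∑ b, p b * (f b - y b) ^ 2 := by
    simpa only [mul_comm (p _)] using sq_sum_mul_le_sum_mul_sq hp fun b => f b - y b
  have hyoung := mul_le_half_mul_sq_add_sq_div (mul_pos hγ hπ) x t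
  have hslack : x ^ 2 / (2 * (γ * π)) ≤ x * (2 / γ * (1 / π)) := by
    have : x ^ 2 ≤ x := by nlinarith [hx.1, hx.2]
    rw [div_le_iff₀ (by positivity)]
    field_simp
    nlinarith [hx.1]
  have hY : x * ∑ b, y b * p b ≤ x * (C - 2 / γ * (1 / π)) :=
    mul_le_mul_of_nonneg_left (by linarith) hx.1
  calc x * ∑ b, f b * p b = x * t + x * ∑ b, y b * p b := by rw [hsplit, mul_add]
    _ ≤ γ * π / 2 * ∑ b, p b * (f b - y b) ^ 2 + x * C := by
      have : γ * π / 2 * t ^ 2 ≤ γ * π / 2 * ∑ b, p b * (f b - y b) ^ 2 := by gcongr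
      linarith
    _ = γ / 2 * ∑ b, π * p b * (f b - y b) ^ 2 + x * C := by
      simp only [mul_sum, mul_assoc]; ring_nf

theorem per_round_regret_inequality_general (K : ℕ) (γ : ℝ) (hγ : γ ≥ 2 * K)
    (Y : Fin K → Fin K → ℝ)
    (p : Fin K → ℝ) (hp : p ∈ stdSimplex ℝ (Fin K))
    (hpos : ∀ i, 0 < p i)
    (hfeas : ∀ i, ∑ b, Y i b * p b + (2 / γ) * (1 / p i) ≤ 5 * K / γ)
    (f : Fin K → Fin K → ℝ)
    (q : Fin K → ℝ) (hq : q ∈ stdSimplex ℝ (Fin K)) :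
    ∑ a, ∑ b, q a * f a b * p b ≤
      (γ / 2) * ∑ a, ∑ b, p a * p b * (f a b - Y a b) ^ 2 + 5 * K / γ := by
  have hK : 0 < K := Nat.pos_of_ne_zero (by rintro rfl; simpa using hp.2)
  have hγ0 : 0 < γ := by
    have : (1 : ℝ) ≤ K := by exact_mod_cast hK
    linarith
  calc ∑ a, ∑ b, q a * f a b * p b = ∑ a, q a * ∑ b, f a b * p b := by
        simp only [mul_sum, mul_assoc]
    _ ≤ ∑ a, (γ / 2 * ∑ b, p a * p b * (f a b - Y a b) ^ 2 + q a * (5 * K / γ)) :=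
        sum_le_sum fun a _ => row_payoff_le_of_feasible hγ0 hp (hpos a)
          (mem_Icc_of_mem_stdSimplex hq a) (hfeas a)
    _ = (γ / 2) * ∑ a, ∑ b, p a * p b * (f a b - Y a b) ^ 2 + 5 * K / γ := by
        rw [sum_add_distrib, ← mul_sum, ← sum_mul, hq.2, one_mul]

theorem per_round_regret_inequality (K : ℕ) (γ : ℝ) (hγ : γ ≥ 2 * K)
    (Y : Fin K → Fin K → ℝ)
    (hYskew : ∀ i j, Y i j = - Y j i)
    (hYbdd : ∀ i j, |Y i j| ≤ 1)
    (p : Fin K → ℝ) (hp : p ∈ stdSimplex ℝ (Fin K))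
    (hpos : ∀ i, 0 < p i)
    (hfeas : ∀ i, ∑ b, Y i b * p b + (2 / γ) * (1 / p i) ≤ 5 * K / γ)
    (f : Fin K → Fin K → ℝ)
    (hfskew : ∀ i j, f i j = - f j i)
    (hfbdd : ∀ i j, |f i j| ≤ 1)
    (q : Fin K → ℝ) (hq : q ∈ stdSimplex ℝ (Fin K)) :
    ∑ a, ∑ b, q a * f a b * p b ≤
      (γ / 2) * ∑ a, ∑ b, p a * p b * (f a b - Y a b) ^ 2 + 5 * K / γ :=
  per_round_regret_inequality_general K γ hγ Y p hp hpos hfeas f q hq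
end

section
/- For reals x with |x| ≤ 1 and y, and parameters c > 0, γ > 0, the function δ ↦ c(x+δ) − (γ/4)·w·δ^2 (with w > 0) is maximized at δ = 2c/(γw), with maximum value c·x + c²/(γw). Consequently, for any p ∈ Δ_K with positive entries, any q ∈ Δ_K, and any skew-symmetric Y ∈ [-1,1]^{K×K}, sup over skew-symmetric δ-matrices of [Σ_{a,b} q[a](Y[a,b]+δ[a,b]) p[b] − (γ/4)Σ_{a≠b} p[a]p[b]δ[a,b]²] ≤ Σ_{a,b} q[a]Y[a,b]p[b] + (2/γ)Σ_a q[a]/p[a]. -/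
/-!
Each off-diagonal term `q a * δ a b * p b - γ/4 * p a * p b * δ a b ^ 2` is a concave quadratic in
`δ a b`, hence at most its vertex value `q a ^ 2 * p b / (γ * p a) ≤ q a * p b / (γ * p a)`.
Skew-symmetry kills the diagonal terms, and summing over `b` with `∑ b, p b = 1` leaves
`(1 / γ) * ∑ a, q a / p a`.
-/

open Finset

theorem mul_sub_quarter_mul_sq_le (c δ : ℝ) {a : ℝ} (ha : 0 < a) :
    c * δ - a / 4 * δ ^ 2 ≤ c ^ 2 / a := by
  rw [le_div_iff₀ ha]
  nlinarith [sq_nonneg (a * δ - 2 * c)]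

theorem mul_sub_quarter_mul_sq_vertex (c : ℝ) {a : ℝ} (ha : a ≠ 0) :
    c * (2 * c / a) - a / 4 * (2 * c / a) ^ 2 = c ^ 2 / a := by
  field_simp
  ring

theorem mul_mul_sub_penalty_le {q p p' γ : ℝ} (hq : q ∈ Set.Icc (0 : ℝ) 1) (hp : 0 < p)
    (hp' : 0 < p') (hγ : 0 < γ) (δ : ℝ) :
    q * δ * p' - γ / 4 * (p * p' * δ ^ 2) ≤ q * p' / (γ * p) := by
  have hquad := mul_sub_quarter_mul_sq_le (q * p') δ (by positivity : 0 < γ * p * p')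
  calc q * δ * p' - γ / 4 * (p * p' * δ ^ 2)
      = q * p' * δ - γ * p * p' / 4 * δ ^ 2 := by ring
    _ ≤ (q * p') ^ 2 / (γ * p * p') := hquad
    _ = q ^ 2 * p' / (γ * p) := by field_simp
    _ ≤ q * p' / (γ * p) := by
        gcongr
        nlinarith [hq.1, hq.2]

theorem sum_mul_sub_penalty_le {ι : Type*} [Fintype ι] [DecidableEq ι] {γ : ℝ} (hγ : 0 < γ)
    {p q : ι → ℝ} (hp : ∀ a, 0 < p a) (hp_sum : ∑ a, p a = 1) (hq : ∀ a, q a ∈ Set.Icc (0 : ℝ) 1)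
    {δ : ι → ι → ℝ} (hδ : ∀ a, δ a a = 0) :
    (∑ a, ∑ b, q a * δ a b * p b) -
        γ / 4 * ∑ a, ∑ b, (if a ≠ b then p a * p b * δ a b ^ 2 else 0) ≤
      1 / γ * ∑ a, q a / p a := by
  have hterm : ∀ a b, q a * δ a b * p b -
      γ / 4 * (if a ≠ b then p a * p b * δ a b ^ 2 else 0) ≤ q a * p b / (γ * p a) := by
    intro a b
    by_cases hab : a = b
    · subst hab
      simp only [hδ, mul_zero, zero_mul, ne_eq, not_true_eq_false, if_false, sub_zero]
      exact div_nonneg (mul_nonneg (hq a).1 (hp a).le) (mul_pos hγ (hp a)).le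
    · simpa only [ne_eq, hab, not_false_eq_true, if_true] using
        mul_mul_sub_penalty_le (hq a) (hp a) (hp b) hγ (δ a b)
  calc (∑ a, ∑ b, q a * δ a b * p b) -
        γ / 4 * ∑ a, ∑ b, (if a ≠ b then p a * p b * δ a b ^ 2 else 0)
      = ∑ a, ∑ b, (q a * δ a b * p b -
          γ / 4 * (if a ≠ b then p a * p b * δ a b ^ 2 else 0)) := by
        simp only [mul_sum, ← sum_sub_distrib]
    _ ≤ ∑ a, ∑ b, q a * p b / (γ * p a) := by gcongr with a _ b _; exact hterm a b
    _ = 1 / γ * ∑ a, q a / p a := by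
        simp only [mul_sum]
        refine sum_congr rfl fun a _ => ?_
        rw [← sum_div, ← mul_sum, hp_sum]
        have := (hp a).ne'
        field_simp

theorem quadratic_max_and_sup_bound (K : ℕ) :
    (∀ (x c γ w : ℝ), |x| ≤ 1 → 0 < c → 0 < γ → 0 < w →
      (∀ δ : ℝ, c * (x + δ) - (γ / 4) * w * δ ^ 2 ≤ c * x + c ^ 2 / (γ * w)) ∧
      c * (x + 2 * c / (γ * w)) - (γ / 4) * w * (2 * c / (γ * w)) ^ 2 =
        c * x + c ^ 2 / (γ * w)) ∧
    ∀ (γ : ℝ), 0 < γ →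
      ∀ p ∈ stdSimplex ℝ (Fin K), (∀ a, 0 < p a) →
      ∀ q ∈ stdSimplex ℝ (Fin K),
      ∀ Y : Fin K → Fin K → ℝ, (∀ i j, Y i j = - Y j i) → (∀ i j, |Y i j| ≤ 1) →
      ∀ δ : Fin K → Fin K → ℝ, (∀ i j, δ i j = - δ j i) →
        (∑ a, ∑ b, q a * (Y a b + δ a b) * p b) -
          (γ / 4) * ∑ a, ∑ b, (if a ≠ b then p a * p b * (δ a b) ^ 2 else 0) ≤
        (∑ a, ∑ b, q a * Y a b * p b) + (2 / γ) * ∑ a, q a / p a := by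
  refine ⟨fun x c γ w _ _ hγ hw => ⟨fun δ => ?_, ?_⟩, ?_⟩
  · have := mul_sub_quarter_mul_sq_le c δ (mul_pos hγ hw)
    linarith [show γ / 4 * w * δ ^ 2 = γ * w / 4 * δ ^ 2 by ring]
  · have := mul_sub_quarter_mul_sq_vertex c (mul_pos hγ hw).ne'
    linarith [show γ / 4 * w * (2 * c / (γ * w)) ^ 2 = γ * w / 4 * (2 * c / (γ * w)) ^ 2 by ring]
  · intro γ hγ p hp hp_pos q hq Y _ _ δ hδ
    have hδ_diag (a : Fin K) : δ a a = 0 := by linarith [hδ a a]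
    have hbound := sum_mul_sub_penalty_le hγ hp_pos hp.2 (mem_Icc_of_mem_stdSimplex hq) hδ_diag
    have hsplit : ∑ a, ∑ b, q a * (Y a b + δ a b) * p b =
        (∑ a, ∑ b, q a * Y a b * p b) + ∑ a, ∑ b, q a * δ a b * p b := by
      simp only [mul_add, add_mul, sum_add_distrib]
    have hslack : 1 / γ * ∑ a, q a / p a ≤ 2 / γ * ∑ a, q a / p a := by
      gcongr
      · exact sum_nonneg fun a _ => div_nonneg (hq.1 a) (hp_pos a).le
      · norm_num
    linarith
end

section
/- (Minimax step of Lemma 1) For any fixed skew-symmetric Y ∈ [-1,1]^{K×K}, γ > 0, and ε ∈ (0,1/2]: min_{p∈Δ_K} max_{q∈Δ_K} [ q^⊤ Y p^(ε) + (2/γ)Σ_a q[a]/p^(ε)[a] ] ≤ ε + 4K/γ, where p^(ε) := (1−ε)p + ε𝟙/K. In particular, choosing ε = K/γ with γ ≥ 2K gives the bound 5K/γ. -/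
/-!
The payoff `q ↦ ∑ a, q a * ℓ a (p)` is linear in `q`, and convex in `p` because each loss
`ℓ a (p) = (Y p^(ε)) a + (2/γ) / p^(ε) a` is an affine function plus a positive multiple of `1/x`
composed with an affine map. Sion's minimax theorem therefore yields a saddle point `(p, q₀)`,
so the payoff of `p` against any `q` is at most the diagonal payoff at `q₀`. On the diagonal,
skew-symmetry kills `q^⊤ Y q`, leaving `(ε/K) q^⊤ Y 𝟙 ≤ ε`, and `q ≤ 2 q^(ε)` coordinatewise
when `ε ≤ 1/2`, so the barrier term is at most `(2/γ) · 2K`.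
-/

open Finset

section Convexity

variable {𝕜 E β ι : Type*} [Semiring 𝕜] [PartialOrder 𝕜] [AddCommMonoid E] [SMul 𝕜 E]
  [AddCommMonoid β] [PartialOrder β] [IsOrderedAddMonoid β] [DistribMulAction 𝕜 β]

theorem ConvexOn.finset_sum {s : Set E} {t : Finset ι} {f : ι → E → β} (hs : Convex 𝕜 s)
    (hf : ∀ i ∈ t, ConvexOn 𝕜 s (f i)) : ConvexOn 𝕜 s fun x => ∑ i ∈ t, f i x :=
  ⟨hs, fun x hx y hy a b ha hb hab => by
    simp only [smul_sum, ← sum_add_distrib]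
    exact sum_le_sum fun i hi => (hf i hi).2 hx hy ha hb hab⟩

end Convexity

theorem exists_forall_le_of_forall_diag_le {E : Type*} [TopologicalSpace E] [AddCommGroup E]
    [Module ℝ E] [IsTopologicalAddGroup E] [ContinuousSMul ℝ E] {X : Set E}
    (hne : X.Nonempty) (hconv : Convex ℝ X) (hcpt : IsCompact X) {f : E → E → ℝ} {c : ℝ}
    (hf_left : ∀ q ∈ X, ContinuousOn (f · q) X ∧ ConvexOn ℝ X (f · q))
    (hf_right : ∀ p ∈ X, ContinuousOn (f p) X ∧ ConcaveOn ℝ X (f p))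
    (hdiag : ∀ q ∈ X, f q q ≤ c) :
    ∃ p ∈ X, ∀ q ∈ X, f p q ≤ c := by
  obtain ⟨p, hp, q₀, hq₀, hsaddle⟩ := Sion.exists_isSaddlePointOn hne hconv hcpt
    (fun q hq => (hf_left q hq).1.lowerSemicontinuousOn)
    (fun q hq => (hf_left q hq).2.quasiconvexOn) hconv hne hcpt
    (fun p hp => (hf_right p hp).1.upperSemicontinuousOn)
    (fun p hp => (hf_right p hp).2.quasiconcaveOn)
  exact ⟨p, hp, fun q hq => (hsaddle q₀ hq₀ q hq).trans (hdiag q₀ hq₀)⟩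

variable {ι : Type*} [Fintype ι]

theorem concaveOn_sum_mul (s : Set (ι → ℝ)) (hs : Convex ℝ s) (v : ι → ℝ) :
    ConcaveOn ℝ s fun q => ∑ a, q a * v a :=
  ⟨hs, fun x _ y _ s t _ _ _ => le_of_eq <| by
    simp only [Pi.add_apply, Pi.smul_apply, smul_eq_mul, add_mul, sum_add_distrib, mul_sum,
      mul_assoc]⟩

theorem exists_mem_stdSimplex_forall_sum_mul_le [Nonempty ι] {ℓ : (ι → ℝ) → ι → ℝ} {c : ℝ}
    (hcont : ∀ a, ContinuousOn (ℓ · a) (stdSimplex ℝ ι))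
    (hconv : ∀ a, ConvexOn ℝ (stdSimplex ℝ ι) (ℓ · a))
    (hdiag : ∀ q ∈ stdSimplex ℝ ι, ∑ a, q a * ℓ q a ≤ c) :
    ∃ p ∈ stdSimplex ℝ ι, ∀ q ∈ stdSimplex ℝ ι, ∑ a, q a * ℓ p a ≤ c := by
  classical
  refine exists_forall_le_of_forall_diag_le ⟨_, single_mem_stdSimplex ℝ (Classical.arbitrary ι)⟩
    (convex_stdSimplex ℝ ι) (isCompact_stdSimplex ℝ ι) (fun q hq => ⟨?_, ?_⟩)
    (fun p _ => ⟨?_, ?_⟩) hdiag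
  · exact continuousOn_finsetSum _ fun a _ => continuousOn_const.mul (hcont a)
  · simpa only [smul_eq_mul] using
      ConvexOn.finset_sum (convex_stdSimplex ℝ ι) fun a _ => (hconv a).smul (hq.1 a)
  · fun_prop
  · exact concaveOn_sum_mul _ (convex_stdSimplex ℝ ι) _

theorem sum_sum_mul_mul_self_eq_zero {Y : ι → ι → ℝ} (hY : ∀ i j, Y i j = -Y j i)
    (q : ι → ℝ) : ∑ a, ∑ b, q a * Y a b * q b = 0 := by
  have h := calc ∑ a, ∑ b, q a * Y a b * q b = ∑ a, ∑ b, -(q b * Y b a * q a) :=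
        sum_congr rfl fun a _ => sum_congr rfl fun b _ => by rw [hY a b]; ring
    _ = -∑ a, ∑ b, q a * Y a b * q b := by rw [sum_comm]; simp only [sum_neg_distrib]
  linarith

theorem sum_sum_mul_le_card {Y : ι → ι → ℝ} (hY : ∀ i j, |Y i j| ≤ 1) {q : ι → ℝ}
    (hq : q ∈ stdSimplex ℝ ι) : ∑ a, ∑ b, q a * Y a b ≤ Fintype.card ι :=
  calc ∑ a, ∑ b, q a * Y a b ≤ ∑ a, ∑ _b : ι, q a :=
        sum_le_sum fun a _ => sum_le_sum fun b _ =>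
          mul_le_of_le_one_right (hq.1 a) (abs_le.1 (hY a b)).2
    _ = Fintype.card ι := by simp [← mul_sum, hq.2]

/-- `p^(ε) = (1 - ε) p + ε 𝟙/K`: the homothety of ratio `1 - ε` centred at the uniform
distribution. -/
noncomputable def uniformMix (ε : ℝ) : (ι → ℝ) →ᵃ[ℝ] (ι → ℝ) :=
  AffineMap.homothety (fun _ => (Fintype.card ι : ℝ)⁻¹) (1 - ε)

variable {ε : ℝ}

theorem uniformMix_apply (ε : ℝ) (p : ι → ℝ) (a : ι) :
    uniformMix ε p a = (1 - ε) * p a + ε / Fintype.card ι := by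
  simp only [uniformMix, AffineMap.homothety_apply, vsub_eq_sub, vadd_eq_add, Pi.add_apply,
    Pi.smul_apply, Pi.sub_apply, smul_eq_mul]
  ring

theorem uniformMix_pos [Nonempty ι] (hε : 0 < ε) (hε1 : ε ≤ 1) {p : ι → ℝ} (hp : 0 ≤ p)
    (a : ι) : 0 < uniformMix ε p a := by
  rw [uniformMix_apply]
  have := mul_nonneg (sub_nonneg.2 hε1) (hp a)
  have : 0 < ε / Fintype.card ι := by positivity
  linarith

theorem sum_div_uniformMix_self_le (hε : 0 ≤ ε) (hε2 : ε ≤ 1 / 2) {q : ι → ℝ}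
    (hq : q ∈ stdSimplex ℝ ι) : ∑ a, q a / uniformMix ε q a ≤ 2 * Fintype.card ι :=
  calc ∑ a, q a / uniformMix ε q a ≤ ∑ _a : ι, (2 : ℝ) := sum_le_sum fun a _ => by
        have hqa := hq.1 a
        have : 0 ≤ ε / Fintype.card ι := by positivity
        rw [uniformMix_apply]
        exact div_le_of_le_mul₀ (by nlinarith) zero_le_two (by nlinarith)
    _ = 2 * Fintype.card ι := by simp [mul_comm]

theorem sum_sum_mul_mul_uniformMix_self_le [Nonempty ι] {Y : ι → ι → ℝ}
    (hskew : ∀ i j, Y i j = -Y j i) (hbdd : ∀ i j, |Y i j| ≤ 1) (hε : 0 ≤ ε) {q : ι → ℝ}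
    (hq : q ∈ stdSimplex ℝ ι) : ∑ a, ∑ b, q a * Y a b * uniformMix ε q b ≤ ε := by
  have hsplit : ∑ a, ∑ b, q a * Y a b * uniformMix ε q b =
      (1 - ε) * ∑ a, ∑ b, q a * Y a b * q b + ε / Fintype.card ι * ∑ a, ∑ b, q a * Y a b := by
    simp only [uniformMix_apply, mul_sum, ← sum_add_distrib]
    exact sum_congr rfl fun a _ => sum_congr rfl fun b _ => by ring
  have hcard : (0 : ℝ) < Fintype.card ι := by exact_mod_cast Fintype.card_pos
  calc ∑ a, ∑ b, q a * Y a b * uniformMix ε q b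
      = ε / Fintype.card ι * ∑ a, ∑ b, q a * Y a b := by
        rw [hsplit, sum_sum_mul_mul_self_eq_zero hskew, mul_zero, zero_add]
    _ ≤ ε / Fintype.card ι * Fintype.card ι := by gcongr; exact sum_sum_mul_le_card hbdd hq
    _ = ε := div_mul_cancel₀ ε hcard.ne'

noncomputable def barrierLoss (Y : ι → ι → ℝ) (γ ε : ℝ) (p : ι → ℝ) (a : ι) : ℝ :=
  ∑ b, Y a b * uniformMix ε p b + 2 / γ / uniformMix ε p a

section BarrierLoss

variable (Y : ι → ι → ℝ) {γ : ℝ}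

theorem convexOn_sum_mul_add_div (a : ι) {c : ℝ} (hc : 0 ≤ c) :
    ConvexOn ℝ {x : ι → ℝ | 0 < x a} fun x => ∑ b, Y a b * x b + c / x a := by
  have hlin := (LinearMap.proj a ∘ₗ Matrix.mulVecLin Y).convexOn (s := {x : ι → ℝ | 0 < x a})
    ((convex_Ioi 0).linear_preimage (LinearMap.proj a))
  have hinv := ((convexOn_zpow (-1)).comp_linearMap
    (LinearMap.proj (R := ℝ) (φ := fun _ : ι => ℝ) a)).smul hc
  refine (hlin.add hinv).congr fun x _ => ?_
  simp only [LinearMap.coe_comp, Function.comp_apply, LinearMap.coe_proj, Function.eval,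
    Pi.add_apply, zpow_neg_one, smul_eq_mul, div_eq_mul_inv]
  rfl

theorem convexOn_barrierLoss [Nonempty ι] (hγ : 0 < γ) (hε : 0 < ε) (hε1 : ε ≤ 1) (a : ι) :
    ConvexOn ℝ (stdSimplex ℝ ι) (barrierLoss Y γ ε · a) :=
  ((convexOn_sum_mul_add_div Y a (by positivity)).comp_affineMap (uniformMix ε)).subset
    (fun p hp => uniformMix_pos hε hε1 hp.1 a) (convex_stdSimplex ℝ ι)

theorem continuousOn_barrierLoss [Nonempty ι] (hε : 0 < ε) (hε1 : ε ≤ 1) (a : ι) :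
    ContinuousOn (barrierLoss Y γ ε · a) (stdSimplex ℝ ι) := by
  simp only [barrierLoss, uniformMix_apply]
  refine ContinuousOn.add (by fun_prop) (continuousOn_const.div (by fun_prop) fun p hp => ?_)
  simpa [uniformMix_apply] using (uniformMix_pos hε hε1 hp.1 a).ne'

theorem sum_mul_barrierLoss (p q : ι → ℝ) :
    ∑ a, q a * barrierLoss Y γ ε p a =
      (∑ a, ∑ b, q a * Y a b * uniformMix ε p b) + 2 / γ * ∑ a, q a / uniformMix ε p a := by
  simp only [barrierLoss, mul_add, sum_add_distrib, mul_sum]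
  congr 1
  · exact sum_congr rfl fun a _ => sum_congr rfl fun b _ => (mul_assoc _ _ _).symm
  · exact sum_congr rfl fun a _ => by ring

end BarrierLoss

theorem sum_mul_barrierLoss_self_le [Nonempty ι] {Y : ι → ι → ℝ} {γ : ℝ}
    (hskew : ∀ i j, Y i j = -Y j i) (hbdd : ∀ i j, |Y i j| ≤ 1) (hγ : 0 < γ) (hε : 0 ≤ ε)
    (hε2 : ε ≤ 1 / 2) {q : ι → ℝ} (hq : q ∈ stdSimplex ℝ ι) :
    ∑ a, q a * barrierLoss Y γ ε q a ≤ ε + 4 * Fintype.card ι / γ := by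
  rw [sum_mul_barrierLoss]
  have hbarrier := mul_le_mul_of_nonneg_left (sum_div_uniformMix_self_le hε hε2 hq)
    (by positivity : 0 ≤ 2 / γ)
  have : 2 / γ * (2 * Fintype.card ι) = 4 * Fintype.card ι / γ := by ring
  linarith [sum_sum_mul_mul_uniformMix_self_le hskew hbdd hε hq]

theorem minimax_step (K : ℕ) (hK : 0 < K)
    (Y : Fin K → Fin K → ℝ)
    (hYskew : ∀ i j, Y i j = - Y j i)
    (hYbdd : ∀ i j, |Y i j| ≤ 1)
    (γ ε : ℝ) (hγ : 0 < γ) (hε : 0 < ε) (hε2 : ε ≤ 1/2) :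
    ∃ p ∈ stdSimplex ℝ (Fin K),
      ∀ q ∈ stdSimplex ℝ (Fin K),
        (∑ a, ∑ b, q a * Y a b * ((1 - ε) * p b + ε / K)) +
          (2 / γ) * ∑ a, q a / ((1 - ε) * p a + ε / K) ≤ ε + 4 * K / γ := by
  have : Nonempty (Fin K) := ⟨⟨0, hK⟩⟩
  have hε1 : ε ≤ 1 := by linarith
  obtain ⟨p, hp, hle⟩ := exists_mem_stdSimplex_forall_sum_mul_le
    (continuousOn_barrierLoss Y hε hε1) (convexOn_barrierLoss Y hγ hε hε1)
    fun q hq => sum_mul_barrierLoss_self_le hYskew hYbdd hγ hε.le hε2 hq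
  refine ⟨p, hp, fun q hq => ?_⟩
  simpa only [sum_mul_barrierLoss, uniformMix_apply, Fintype.card_fin] using hle q hq
end

section
/- Let U ∈ ℝ^{K×K} and let p ∈ Δ_{K×K} be a coarse correlated equilibrium of U, meaning Σ_{a,b} p[a,b]U[a,b] ≥ max_{a*} Σ_b p^r[b] U[a*,b] and Σ_{a,b} p[a,b]U[b,a] ≥ max_{b*} Σ_a p^ℓ[a] U[b*,a], where p^ℓ[a]=Σ_b p[a,b] and p^r[b]=Σ_a p[a,b]. Suppose P ∈ ℝ^{K×K} satisfies P[a,b] ≤ U[a,b] entrywise and U[a,b] + U[b,a] = 2C[a,b] for some matrix C. Then for every q ∈ Δ_K: q^⊤ P (p^ℓ + p^r) ≤ 2·Σ_{a,b} p[a,b] C[a,b]. -/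
/-!
Since `P ≤ U` and the marginals are nonnegative, a pure row `a` earns at most `U a ⬝ (pˡ + pʳ)`,
which the two CCE conditions at `a` bound by the sum of both players' equilibrium payoffs
`⟨p, Uᵀ⟩ + ⟨p, U⟩`. Averaging over `q` keeps this bound, and `U + Uᵀ = 2C` turns it into `2⟨p, C⟩`.
-/

open Finset

section
variable {ι : Type*} [Fintype ι]

theorem sum_mul_le_of_mem_stdSimplex {q : ι → ℝ} (hq : q ∈ stdSimplex ℝ ι) {f : ι → ℝ} {M : ℝ}
    (hf : ∀ i, f i ≤ M) : ∑ i, q i * f i ≤ M :=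
  calc ∑ i, q i * f i ≤ ∑ i, q i * M :=
        sum_le_sum fun i _ => mul_le_mul_of_nonneg_left (hf i) (hq.1 i)
    _ = M := by rw [← sum_mul, hq.2, one_mul]

theorem sum_sum_mul_add_sum_sum_mul_swap {p U C : ι → ι → ℝ}
    (hUC : ∀ a b, U a b + U b a = 2 * C a b) :
    ∑ a, ∑ b, p a b * U b a + ∑ a, ∑ b, p a b * U a b = 2 * ∑ a, ∑ b, p a b * C a b := by
  simp only [← sum_add_distrib, mul_sum]
  exact sum_congr rfl fun a _ => sum_congr rfl fun b _ => by linear_combination p a b * hUC a b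

end

theorem cce_regret_bound (K : ℕ)
    (U P C : Fin K → Fin K → ℝ)
    (p : Fin K → Fin K → ℝ)
    (hp : (fun ab : Fin K × Fin K => p ab.1 ab.2) ∈ stdSimplex ℝ (Fin K × Fin K))
    (hCCE1 : ∀ astar, ∑ a, ∑ b, p a b * U a b ≥ ∑ b, (∑ a, p a b) * U astar b)
    (hCCE2 : ∀ bstar, ∑ a, ∑ b, p a b * U b a ≥ ∑ a, (∑ b, p a b) * U bstar a)
    (hPU : ∀ a b, P a b ≤ U a b)
    (hUC : ∀ a b, U a b + U b a = 2 * C a b)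
    (q : Fin K → ℝ) (hq : q ∈ stdSimplex ℝ (Fin K)) :
    ∑ a, ∑ b, q a * P a b * ((∑ c, p b c) + (∑ c, p c b)) ≤
      2 * ∑ a, ∑ b, p a b * C a b := by
  have hp0 : ∀ a b, 0 ≤ p a b := fun a b => hp.1 (a, b)
  have hrow : ∀ a, ∑ b, P a b * ((∑ c, p b c) + (∑ c, p c b)) ≤
      ∑ a, ∑ b, p a b * U b a + ∑ a, ∑ b, p a b * U a b := fun a =>
    calc ∑ b, P a b * ((∑ c, p b c) + (∑ c, p c b))
        ≤ ∑ b, U a b * ((∑ c, p b c) + (∑ c, p c b)) :=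
          sum_le_sum fun b _ => mul_le_mul_of_nonneg_right (hPU a b)
            (add_nonneg (sum_nonneg fun c _ => hp0 b c) (sum_nonneg fun c _ => hp0 c b))
      _ = ∑ b, (∑ c, p b c) * U a b + ∑ b, (∑ c, p c b) * U a b := by
          rw [← sum_add_distrib]; exact sum_congr rfl fun b _ => by ring
      _ ≤ _ := add_le_add (hCCE2 a) (hCCE1 a)
  calc ∑ a, ∑ b, q a * P a b * ((∑ c, p b c) + (∑ c, p c b))
      = ∑ a, q a * ∑ b, P a b * ((∑ c, p b c) + (∑ c, p c b)) := by simp only [mul_sum, mul_assoc]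
    _ ≤ _ := sum_mul_le_of_mem_stdSimplex hq hrow
    _ = _ := sum_sum_mul_add_sum_sum_mul_swap hUC
end
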